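/- If c₂ ≠ 0, then the interior CMC slice is defined for all sufficiently small r > 0 and the interior Brown–York mass blows up at the Schwarzschild singularity at rate r^(−1): lim_{r→0⁺} r·m_BY(r) = −|c₂|. -/

import Mathlib

open Real Filter Topology Set

/-! Clearing denominators, `r⁴ (P² + f) = (Ĥ r³ + c₂)² + r⁴ − 2 M r³ =: Q(r)`
(`clearedRadicand`), a polynomial with `Q(0) = c₂² > 0`; so the slice exists near `r = 0`.
On the slice `f⁻¹ − f 𝔥'² = (P² + f)⁻¹`, whence `r · m_BY(r) = r² − √Q(r) → −|c₂|`. -/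

/-- Schwarzschild lapse-type function `f(r) = 1 - 2M/r` (negative in the interior
`0 < r < 2M`). -/
noncomputable def f (M r : ℝ) : ℝ := 1 - 2 * M / r

/-- `P(r) = Ĥ·r + c₂/r²`. -/
noncomputable def P (H c2 r : ℝ) : ℝ := H * r + c2 / r ^ 2

/-- Slope of the interior CMC slice:
`𝔥'(r) = |P(r)|/((2M/r − 1)·√(P(r)² + f(r)))`, defined on
`{0 < r < 2M : P(r)² + f(r) > 0}`. -/
noncomputable def hInt' (M H c2 r : ℝ) : ℝ :=
  |P H c2 r| / ((2 * M / r - 1) * Real.sqrt ((P H c2 r) ^ 2 + f M r))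

/-- Interior Brown–York mass `m_BY(r) = r(1 − (f⁻¹ − f 𝔥'²)^(−1/2))`. -/
noncomputable def mBYint (M H c2 r : ℝ) : ℝ :=
  r * (1 - ((f M r)⁻¹ - f M r * (hInt' M H c2 r) ^ 2) ^ (-(1 : ℝ) / 2))

noncomputable def clearedRadicand (M H c2 r : ℝ) : ℝ :=
  (H * r ^ 3 + c2) ^ 2 + r ^ 4 - 2 * M * r ^ 3

theorem P_sq_add_f_eq {M H c2 r : ℝ} (hr : r ≠ 0) :
    P H c2 r ^ 2 + f M r = clearedRadicand M H c2 r / r ^ 4 := by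
  unfold P f clearedRadicand
  field_simp
  ring

theorem f_neg {M r : ℝ} (hr : 0 < r) (hrM : r < 2 * M) : f M r < 0 := by
  have : 1 < 2 * M / r := (one_lt_div hr).2 hrM
  unfold f
  linarith

section Slice

variable {M H c2 r : ℝ} (hf : f M r ≠ 0) (hpos : 0 < P H c2 r ^ 2 + f M r)
include hf hpos

theorem f_inv_sub_f_mul_hInt'_sq :
    (f M r)⁻¹ - f M r * hInt' M H c2 r ^ 2 = (P H c2 r ^ 2 + f M r)⁻¹ := by
  have hslope : hInt' M H c2 r ^ 2 = P H c2 r ^ 2 / (f M r ^ 2 * (P H c2 r ^ 2 + f M r)) := by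
    rw [hInt', div_pow, mul_pow, sq_abs, sq_sqrt hpos.le,
      show 2 * M / r - 1 = -f M r by unfold f; ring, neg_sq]
  rw [hslope]
  field_simp [hpos.ne']
  ring

theorem mBYint_eq : mBYint M H c2 r = r * (1 - √(P H c2 r ^ 2 + f M r)) := by
  rw [mBYint, f_inv_sub_f_mul_hInt'_sq hf hpos, inv_rpow hpos.le, ← rpow_neg hpos.le,
    show -(-(1 : ℝ) / 2) = 1 / 2 by norm_num, ← sqrt_eq_rpow]

theorem mul_mBYint_eq (hr : r ≠ 0) :
    r * mBYint M H c2 r = r ^ 2 - √(clearedRadicand M H c2 r) := by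
  have hcleared : clearedRadicand M H c2 r = (r ^ 2) ^ 2 * (P H c2 r ^ 2 + f M r) := by
    rw [P_sq_add_f_eq hr]
    field_simp
  rw [mBYint_eq hf hpos, hcleared, sqrt_mul (by positivity), sqrt_sq (by positivity)]
  ring

end Slice

theorem tendsto_clearedRadicand_nhdsGT_zero (M H c2 : ℝ) :
    Tendsto (clearedRadicand M H c2) (𝓝[>] 0) (𝓝 (c2 ^ 2)) := by
  have hcont : Continuous (clearedRadicand M H c2) := by
    unfold clearedRadicand
    fun_prop
  simpa [clearedRadicand] using (hcont.tendsto 0).mono_left nhdsWithin_le_nhds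

/-- If `c₂ ≠ 0`, then the interior CMC slice is defined for all sufficiently small
`r > 0` and the interior Brown–York mass blows up at the Schwarzschild singularity at
rate `r^(−1)`: `lim_{r→0⁺} r·m_BY(r) = −|c₂|`. -/
theorem interior_brown_york_blowup (M H c2 : ℝ) (hM : 0 < M) (hc : c2 ≠ 0) :
    (∀ᶠ r in 𝓝[>] (0 : ℝ), r < 2 * M ∧ 0 < (P H c2 r) ^ 2 + f M r) ∧
    Tendsto (fun r => r * mBYint M H c2 r) (𝓝[>] (0 : ℝ)) (𝓝 (-|c2|)) := by
  have hQ := tendsto_clearedRadicand_nhdsGT_zero M H c2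
  have hr_pos : ∀ᶠ r in 𝓝[>] (0 : ℝ), 0 < r := self_mem_nhdsWithin
  have hr_lt : ∀ᶠ r in 𝓝[>] (0 : ℝ), r < 2 * M :=
    nhdsWithin_le_nhds (eventually_lt_nhds (by positivity))
  have hQ_pos : ∀ᶠ r in 𝓝[>] (0 : ℝ), 0 < clearedRadicand M H c2 r :=
    hQ.eventually (eventually_gt_nhds (by positivity))
  have hslice : ∀ᶠ r in 𝓝[>] (0 : ℝ), r < 2 * M ∧ 0 < P H c2 r ^ 2 + f M r := by
    filter_upwards [hr_pos, hr_lt, hQ_pos] with r hr hrM hQr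
    exact ⟨hrM, by rw [P_sq_add_f_eq hr.ne']; positivity⟩
  refine ⟨hslice, ?_⟩
  have hlim :
      Tendsto (fun r => r ^ 2 - √(clearedRadicand M H c2 r)) (𝓝[>] 0) (𝓝 (-|c2|)) := by
    have hsq : Tendsto (fun r : ℝ => r ^ 2) (𝓝[>] 0) (𝓝 0) := by
      simpa using ((continuous_pow 2).tendsto (0 : ℝ)).mono_left nhdsWithin_le_nhds
    simpa [sqrt_sq_eq_abs] using hsq.sub hQ.sqrt
  refine hlim.congr' ?_
  filter_upwards [hr_pos, hslice] with r hr ⟨hrM, hpos⟩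
  exact (mul_mBYint_eq (f_neg hr hrM).ne hpos hr.ne').symm
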